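/- arXiv:1005.1300 — 3 statements merged into one kernel-verified Lean document; each statement's English description precedes it below -/
import Mathlib

section
/- The relation ∼ on the arrows of the category of simplices Δ/C, defined by a_* ∼ b_* : x → x' iff for every i the arrow x'(m(i) → M(i)) is an identity (where m(i) = min(a(i), b(i)) and M(i) = max(a(i), b(i))), is an equivalence relation. -/
open CategoryTheory

/-- An arrow in a category "is an identity" if its source and target coincide and it is
the identity of that object. -/
def IsIdArrow {C : Type*} [Category C] {X Y : C} (f : X ⟶ Y) : Prop :=
  ∃ h : X = Y, f = eqToHom h

/-- The relation `∼` of the paper on parallel maps of chains `a_*, b_* : x → x'` in the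
category of simplices `Δ/C`: `a_* ∼ b_*` iff `x'(min (a i) (b i) → max (a i) (b i))` is an
identity for every `i`.  Here a chain (an `n`-simplex of the nerve of `C`) is a functor
`Fin (n+1) ⥤ C` from the finite ordinal `[n]`. -/
def SimRel {C : Type*} [Category C] {n n' : ℕ} (x' : Fin (n' + 1) ⥤ C)
    (a b : Fin (n + 1) →o Fin (n' + 1)) : Prop :=
  ∀ i : Fin (n + 1),
    IsIdArrow (x'.map (homOfLE (min_le_max : min (a i) (b i) ≤ max (a i) (b i))))

/-- `a : [n] → [n']` underlies an arrow of `Δ/C` from the chain `x` to the chain `x'`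
precisely when `x' ∘ a = x`. -/
def ChainCompat {C : Type*} [Category C] {n n' : ℕ} (x : Fin (n + 1) ⥤ C)
    (x' : Fin (n' + 1) ⥤ C) (a : Fin (n + 1) →o Fin (n' + 1)) : Prop :=
  a.monotone.functor ⋙ x' = x

/-- The arrows `x → x'` of the category of simplices `Δ/C`. -/
def ChainArrow {C : Type*} [Category C] {n n' : ℕ} (x : Fin (n + 1) ⥤ C)
    (x' : Fin (n' + 1) ⥤ C) : Type _ :=
  { a : Fin (n + 1) →o Fin (n' + 1) // ChainCompat x x' a }

/-! Identities satisfy two-out-of-three under composition. The condition on `F(min p q → max p q)`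
is symmetric in `p, q`, so transitivity reduces to `p ≤ r`; each position of `q` relative to
`p ≤ r` then writes one of the arrows between `p`, `q`, `r` as the composite of the other two. -/

namespace IsIdArrow

variable {C : Type*} [Category C] {X Y Z : C} {f : X ⟶ Y} {g : Y ⟶ Z}

lemma comp (hf : IsIdArrow f) (hg : IsIdArrow g) : IsIdArrow (f ≫ g) := by
  obtain ⟨rfl, rfl⟩ := hf
  obtain ⟨rfl, rfl⟩ := hg
  exact ⟨rfl, by simp⟩

lemma of_comp_left (hfg : IsIdArrow (f ≫ g)) (hf : IsIdArrow f) : IsIdArrow g := by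
  obtain ⟨rfl, rfl⟩ := hf
  simpa using hfg

lemma of_comp_right (hfg : IsIdArrow (f ≫ g)) (hg : IsIdArrow g) : IsIdArrow f := by
  obtain ⟨rfl, rfl⟩ := hg
  simpa using hfg

end IsIdArrow

lemma CategoryTheory.Functor.map_homOfLE_trans {C : Type*} [Category C] {α : Type*} [Preorder α]
    (F : α ⥤ C) {u v w : α} (huv : u ≤ v) (hvw : v ≤ w) :
    F.map (homOfLE (huv.trans hvw)) = F.map (homOfLE huv) ≫ F.map (homOfLE hvw) := by
  rw [← F.map_comp, homOfLE_comp]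

section LinearOrder

variable {C : Type*} [Category C] {α : Type*} [LinearOrder α] (F : α ⥤ C)

def IsIdBetween (p q : α) : Prop :=
  IsIdArrow (F.map (homOfLE (min_le_max : min p q ≤ max p q)))

variable {F} {p q r : α}

lemma isIdArrow_map_homOfLE_congr {u v u' v' : α} (h : u ≤ v) (h' : u' ≤ v') (hu : u = u')
    (hv : v = v') : IsIdArrow (F.map (homOfLE h)) ↔ IsIdArrow (F.map (homOfLE h')) := by
  subst hu hv
  rfl

lemma isIdBetween_iff_of_le (h : p ≤ q) :
    IsIdBetween F p q ↔ IsIdArrow (F.map (homOfLE h)) :=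
  isIdArrow_map_homOfLE_congr _ _ (min_eq_left h) (max_eq_right h)

lemma isIdBetween_refl (p : α) : IsIdBetween F p p :=
  (isIdBetween_iff_of_le le_rfl).2 ⟨rfl, F.map_id p⟩

lemma IsIdBetween.symm (h : IsIdBetween F p q) : IsIdBetween F q p :=
  (isIdArrow_map_homOfLE_congr _ _ (min_comm p q) (max_comm p q)).1 h

lemma IsIdBetween.trans (h₁ : IsIdBetween F p q) (h₂ : IsIdBetween F q r) :
    IsIdBetween F p r := by
  wlog hpr : p ≤ r generalizing p r
  · exact (this h₂.symm h₁.symm (le_of_not_ge hpr)).symm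
  rw [isIdBetween_iff_of_le hpr]
  rcases le_total q p with hqp | hpq
  · rw [isIdBetween_iff_of_le (hqp.trans hpr), F.map_homOfLE_trans hqp hpr] at h₂
    exact h₂.of_comp_left ((isIdBetween_iff_of_le hqp).1 h₁.symm)
  rcases le_total q r with hqr | hrq
  · rw [F.map_homOfLE_trans hpq hqr]
    exact ((isIdBetween_iff_of_le hpq).1 h₁).comp ((isIdBetween_iff_of_le hqr).1 h₂)
  · rw [isIdBetween_iff_of_le (hpr.trans hrq), F.map_homOfLE_trans hpr hrq] at h₁
    exact h₁.of_comp_right ((isIdBetween_iff_of_le hrq).1 h₂.symm)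

end LinearOrder

lemma equivalence_simRel {C : Type*} [Category C] {n n' : ℕ} (x' : Fin (n' + 1) ⥤ C) :
    Equivalence (SimRel (n := n) x') :=
  ⟨fun a i => isIdBetween_refl (a i), fun h i => IsIdBetween.symm (h i),
    fun h₁ h₂ i => IsIdBetween.trans (h₁ i) (h₂ i)⟩

/-- the relation `∼` on the arrows `x → x'` of the category of simplices
`Δ/C` is an equivalence relation. -/
theorem simRel_equivalence {C : Type*} [Category C] {n n' : ℕ}
    (x : Fin (n + 1) ⥤ C) (x' : Fin (n' + 1) ⥤ C) :
    Equivalence (fun a b : ChainArrow x x' => SimRel x' a.1 b.1) :=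
  (equivalence_simRel x').comap Subtype.val
end

section
/- In the hom-category C̃(c,c') with c ≠ c', every arrow [a_*] : x → x' can be represented by an injective monotone map a : [n] → [n'] satisfying a(0) = 0 and a(n) = n'. -/
open CategoryTheory

/-- A chain `x : [n] → C` is nondegenerate if none of its elementary arrows
`x(i → i+1)` is an identity. -/
def NondegChain {C : Type*} [Category C] {n : ℕ} (x : Fin (n + 1) ⥤ C) : Prop :=
  ∀ i : Fin n, ¬ IsIdArrow (x.map (homOfLE (Fin.castSucc_le_succ i)))

/-- The condition for an arrow `a_* : x → x'` of `Δ/C` to preserve the first element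
up to identities, i.e. `x'(0 → a 0) = id`. -/
def PreservesFirst {C : Type*} [Category C] {n n' : ℕ} (x' : Fin (n' + 1) ⥤ C)
    (a : Fin (n + 1) →o Fin (n' + 1)) : Prop :=
  IsIdArrow (x'.map (homOfLE (Fin.zero_le (a 0))))

/-- The condition for an arrow `a_* : x → x'` of `Δ/C` to preserve the last element
up to identities, i.e. `x'(a n → n') = id`. -/
def PreservesLast {C : Type*} [Category C] {n n' : ℕ} (x' : Fin (n' + 1) ⥤ C)
    (a : Fin (n + 1) →o Fin (n' + 1)) : Prop :=
  IsIdArrow (x'.map (homOfLE (Fin.le_last (a (Fin.last n)))))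

/-!
Since `x = x' ∘ a` is nondegenerate, `a` is strictly monotone. Moving `a 0` down to `0` and
`a n` up to `n'` keeps it strictly monotone, and since `x'(0 → a 0)` and `x'(a n → n')` are
identities the new map `b` is `∼`-equivalent to `a`. Equivalent maps induce the same functor
`x' ∘ a = x' ∘ b`: the arrows `x'(a i → a j)` and `x'(b i → b j)` differ only by identity arrows
at their ends. Finally `c ≠ c'` forces `n ≠ 0`, so that `b 0 = 0`.
-/

open Function

section Collapses

variable {C : Type*} [Category C]

lemma isIdArrow_map_homOfLE_of_eq {P : Type*} [Preorder P] (F : P ⥤ C) {p q : P}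
    (h : p ≤ q) (e : p = q) : IsIdArrow (F.map (homOfLE h)) := by
  subst e
  exact ⟨rfl, by rw [Subsingleton.elim (homOfLE h) (𝟙 p), F.map_id, eqToHom_refl]⟩

lemma isIdArrow_map_homOfLE_congr_s8 {P : Type*} [Preorder P] (F : P ⥤ C) {p q p' q' : P}
    (h : p ≤ q) (h' : p' ≤ q') (hp : p = p') (hq : q = q') :
    IsIdArrow (F.map (homOfLE h)) ↔ IsIdArrow (F.map (homOfLE h')) := by
  subst hp hq
  rfl

variable {P : Type*} [LinearOrder P]

/-- `SimRel x' a b` unfolds to `∀ i, Collapses x' (a i) (b i)`. -/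
def Collapses (F : P ⥤ C) (p q : P) : Prop :=
  IsIdArrow (F.map (homOfLE (min_le_max : min p q ≤ max p q)))

lemma collapses_iff_of_le (F : P ⥤ C) {p q : P} (h : p ≤ q) :
    Collapses F p q ↔ IsIdArrow (F.map (homOfLE h)) :=
  isIdArrow_map_homOfLE_congr_s8 F _ h (min_eq_left h) (max_eq_right h)

lemma collapses_self (F : P ⥤ C) (p : P) : Collapses F p p :=
  isIdArrow_map_homOfLE_of_eq F _ (by rw [min_self, max_self])

namespace Collapses

variable {F : P ⥤ C} {p q : P}

lemma symm (h : Collapses F p q) : Collapses F q p :=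
  (isIdArrow_map_homOfLE_congr_s8 F _ _ (min_comm p q) (max_comm p q)).1 h

lemma obj_eq (h : Collapses F p q) : F.obj p = F.obj q := by
  rcases le_total p q with hpq | hqp
  · exact ((collapses_iff_of_le F hpq).1 h).1
  · exact ((collapses_iff_of_le F hqp).1 h.symm).1.symm

lemma map_heq_of_source (h : Collapses F p q) {r : P} (hpr : p ≤ r) (hqr : q ≤ r) :
    F.map (homOfLE hpr) ≍ F.map (homOfLE hqr) := by
  wlog hpq : p ≤ q generalizing p q
  · exact (this h.symm hqr hpr (le_of_not_ge hpq)).symm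
  obtain ⟨e, he⟩ := (collapses_iff_of_le F hpq).1 h
  rw [← homOfLE_comp hpq hqr, F.map_comp, he]
  exact eqToHom_comp_heq _ _

lemma map_heq_of_target (h : Collapses F p q) {r : P} (hrp : r ≤ p) (hrq : r ≤ q) :
    F.map (homOfLE hrp) ≍ F.map (homOfLE hrq) := by
  wlog hpq : p ≤ q generalizing p q
  · exact (this h.symm hrq hrp (le_of_not_ge hpq)).symm
  obtain ⟨e, he⟩ := (collapses_iff_of_le F hpq).1 h
  rw [← homOfLE_comp hrp hpq, F.map_comp, he]
  exact (comp_eqToHom_heq _ _).symm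

/-- One of the mixed pairs `(p', q)` and `(p, q')` is ordered, since `q < p'` and `q' < p`
would give `p < p`; change one endpoint at a time through it. -/
lemma map_heq {p' q' : P} (hp : Collapses F p p') (hq : Collapses F q q')
    (hpq : p ≤ q) (hpq' : p' ≤ q') : F.map (homOfLE hpq) ≍ F.map (homOfLE hpq') := by
  rcases le_total p' q with hp'q | hqp'
  · exact (hp.map_heq_of_source hpq hp'q).trans (hq.map_heq_of_target hp'q hpq')
  · have hpq'' : p ≤ q' := hpq.trans (hqp'.trans hpq')
    exact (hq.map_heq_of_target hpq hpq'').trans (hp.map_heq_of_source hpq'' hpq')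

end Collapses

lemma monotone_functor_comp_eq_of_collapses {Q : Type*} [Preorder Q] (F : P ⥤ C)
    {a b : Q →o P} (h : ∀ i, Collapses F (a i) (b i)) :
    a.monotone.functor ⋙ F = b.monotone.functor ⋙ F :=
  Functor.hext (fun i => (h i).obj_eq) fun i j _ => (h i).map_heq (h j) _ _

end Collapses

lemma strictMono_of_chainCompat {C : Type*} [Category C] {n n' : ℕ} {x : Fin (n + 1) ⥤ C}
    {x' : Fin (n' + 1) ⥤ C} (hx : NondegChain x) {a : Fin (n + 1) →o Fin (n' + 1)}
    (hcomp : ChainCompat x x' a) : StrictMono a := by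
  rw [Fin.strictMono_iff_lt_succ]
  intro i
  refine (a.monotone (Fin.castSucc_le_succ i)).lt_of_ne fun h => hx i ?_
  subst hcomp
  exact isIdArrow_map_homOfLE_of_eq x' _ h

section UpdateBotTop

variable {α β : Type*} [PartialOrder α] [BoundedOrder α] [DecidableEq α]

lemma StrictMono.update_bot_top [Preorder β] [BoundedOrder β] {f : α → β}
    (hf : StrictMono f) : StrictMono (update (update f ⊥ ⊥) ⊤ ⊤) := by
  intro i j hij
  have hi : i ≠ ⊤ := hij.ne_top
  have hj : j ≠ ⊥ := hij.ne_bot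
  calc update (update f ⊥ ⊥) ⊤ ⊤ i ≤ f i := by
        rw [update_of_ne hi]
        rcases eq_or_ne i ⊥ with rfl | hi'
        · simp
        · rw [update_of_ne hi']
    _ < f j := hf hij
    _ ≤ update (update f ⊥ ⊥) ⊤ ⊤ j := by
        rcases eq_or_ne j ⊤ with rfl | hj'
        · simp
        · rw [update_of_ne hj', update_of_ne hj]

lemma collapses_update_bot_top {C : Type*} [Category C] [LinearOrder β] [BoundedOrder β]
    (F : β ⥤ C) {f : α → β} (hbot : Collapses F (f ⊥) ⊥) (htop : Collapses F (f ⊤) ⊤) (i : α) :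
    Collapses F (f i) (update (update f ⊥ ⊥) ⊤ ⊤ i) := by
  rcases eq_or_ne i ⊤ with rfl | hi
  · simpa using htop
  rcases eq_or_ne i ⊥ with rfl | hi'
  · simpa [hi] using hbot
  · simpa [hi, hi'] using collapses_self F (f i)

end UpdateBotTop

theorem tilde_arrow_injective_rep_general {C : Type*} [Category C] {c c' : C} (hcc : c ≠ c')
    {n n' : ℕ} (x : Fin (n + 1) ⥤ C) (x' : Fin (n' + 1) ⥤ C)
    (hx0 : x.obj 0 = c) (hxl : x.obj (Fin.last n) = c')
    (hx : NondegChain x)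
    (a : Fin (n + 1) →o Fin (n' + 1)) (hcomp : ChainCompat x x' a)
    (hfirst : PreservesFirst x' a) (hlast : PreservesLast x' a) :
    ∃ b : Fin (n + 1) →o Fin (n' + 1),
      Function.Injective b ∧ b 0 = 0 ∧ b (Fin.last n) = Fin.last n' ∧
      ChainCompat x x' b ∧ SimRel x' a b := by
  have hn : (⊥ : Fin (n + 1)) ≠ ⊤ := fun h => hcc (hx0.symm.trans ((congrArg x.obj h).trans hxl))
  have hb : StrictMono (update (update a ⊥ ⊥) ⊤ ⊤) :=
    (strictMono_of_chainCompat hx hcomp).update_bot_top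
  have hsim : ∀ i, Collapses x' (a i) (update (update a ⊥ ⊥) ⊤ ⊤ i) :=
    collapses_update_bot_top x' ((collapses_iff_of_le x' _).2 hfirst).symm
      ((collapses_iff_of_le x' _).2 hlast)
  refine ⟨⟨_, hb.monotone⟩, hb.injective, ?_, update_self _ _ _, ?_, hsim⟩
  · exact (update_of_ne hn _ _).trans (update_self _ _ _)
  · unfold ChainCompat at hcomp ⊢
    rw [← hcomp]
    exact monotone_functor_comp_eq_of_collapses x' fun i => (hsim i).symm

/-- in the hom-category `C̃(c,c')` with `c ≠ c'`, every arrow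
`[a_*] : x → x'` can be represented by an injective monotone map `a : [n] → [n']`
with `a 0 = 0` and `a n = n'`. -/
theorem tilde_arrow_injective_rep {C : Type*} [Category C] {c c' : C} (hcc : c ≠ c')
    {n n' : ℕ} (x : Fin (n + 1) ⥤ C) (x' : Fin (n' + 1) ⥤ C)
    (hx0 : x.obj 0 = c) (hxl : x.obj (Fin.last n) = c')
    (hx'0 : x'.obj 0 = c) (hx'l : x'.obj (Fin.last n') = c')
    (hx : NondegChain x) (hx' : NondegChain x')
    (a : Fin (n + 1) →o Fin (n' + 1)) (hcomp : ChainCompat x x' a)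
    (hfirst : PreservesFirst x' a) (hlast : PreservesLast x' a) :
    ∃ b : Fin (n + 1) →o Fin (n' + 1),
      Function.Injective b ∧ b 0 = 0 ∧ b (Fin.last n) = Fin.last n' ∧
      ChainCompat x x' b ∧ SimRel x' a b :=
  tilde_arrow_injective_rep_general hcc x x' hx0 hxl hx a hcomp hfirst hlast
end

section
/- Given a normal lax functor F : B ⇝ Cat from a small category B, the Grothendieck construction F ⋊ B, with objects pairs (x, b) where x is an object of F(b), arrows (x,b) → (x',b') pairs (f, α) with α : b → b' in B and f : F(α)(x) → x' in F(b'), and composition (f',α') ∘ (f,α) = (f' ∘ F(α')(f) ∘ F^x_{α',α}, α'α), is a category: composition is associative and unital. -/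
open CategoryTheory

universe v u

/-- A normal lax functor `F : B ⇝ Cat` from a small category `B`: categories `F b`,
functors `F α`, strictly preserved identities, structural natural transformations
`F_{α',α} : F (α ≫ α') ⟶ F α ⋙ F α'` which are normal and satisfy the cocycle
(coherence) condition. -/
structure NLax (B : Type*) [Category B] where
  obj : B → Cat.{v, u}
  map : ∀ {b b' : B}, (b ⟶ b') → (obj b ⥤ obj b')
  map_id : ∀ b : B, map (𝟙 b) = 𝟭 (obj b)
  comp2 : ∀ {b b' b'' : B} (α : b ⟶ b') (α' : b' ⟶ b''), map (α ≫ α') ⟶ map α ⋙ map α'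
  comp2_id_left : ∀ {b b' : B} (α : b ⟶ b'),
    comp2 (𝟙 b) α = eqToHom (by rw [Category.id_comp, map_id]; exact (Functor.id_comp _).symm)
  comp2_id_right : ∀ {b b' : B} (α : b ⟶ b'),
    comp2 α (𝟙 b') = eqToHom (by rw [Category.comp_id, map_id]; exact (Functor.comp_id _).symm)
  comp2_assoc : ∀ {b₀ b₁ b₂ b₃ : B} (α : b₀ ⟶ b₁) (α' : b₁ ⟶ b₂) (α'' : b₂ ⟶ b₃)
    (x : obj b₀),
    (comp2 (α ≫ α') α'').app x ≫ (map α'').map ((comp2 α α').app x) =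
      eqToHom (by rw [Category.assoc]) ≫ (comp2 α (α' ≫ α'')).app x ≫
        (comp2 α' α'').app ((map α).obj x)

variable {B : Type*} [Category B] (F : NLax B)

/-- The objects of the Grothendieck construction `F ⋊ B`: pairs `(x, b)` with
`x` an object of `F b`. -/
def GrObj (F : NLax B) : Type _ := Σ b : B, F.obj b

/-- The arrows `(x, b) → (x', b')` of the Grothendieck construction: pairs `(f, α)` with
`α : b ⟶ b'` and `f : F α x ⟶ x'`. -/
def GrHom (X Y : GrObj F) : Type _ := Σ' α : X.1 ⟶ Y.1, ((F.map α).obj X.2 ⟶ Y.2)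

/-- The identity arrow of `(x, b)`. -/
def GrId (X : GrObj F) : GrHom F X X :=
  ⟨𝟙 X.1, eqToHom (by rw [F.map_id]; rfl)⟩

/-- The composition `(f', α') ∘ (f, α) = (f' ∘ F α' f ∘ F_{α',α}^x, α ≫ α')` of the
Grothendieck construction. -/
def GrComp {X Y Z : GrObj F} (f : GrHom F X Y) (g : GrHom F Y Z) : GrHom F X Z :=
  ⟨f.1 ≫ g.1, (F.comp2 f.1 g.1).app X.2 ≫ (F.map g.1).map f.2 ≫ g.2⟩

theorem GrHom.ext {X Y : GrObj F} (f g : GrHom F X Y) (h₁ : f.1 = g.1)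
    (h₂ : f.2 = eqToHom (by rw [h₁]) ≫ g.2) : f = g := by
  obtain ⟨α, f⟩ := f
  obtain ⟨β, g⟩ := g
  dsimp at h₁
  subst h₁
  simp only [eqToHom_refl, Category.id_comp] at h₂
  subst h₂
  rfl

theorem grComp_assoc {W X Y Z : GrObj F} (f : GrHom F W X) (g : GrHom F X Y)
    (h : GrHom F Y Z) : GrComp F (GrComp F f g) h = GrComp F f (GrComp F g h) := by
  refine GrHom.ext F _ _ (Category.assoc _ _ _) ?_
  simp only [GrComp, Functor.map_comp, Category.assoc]
  -- The coherence condition matches the structure maps of both sides; naturality of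
  -- `F_{h,g}` then moves `F h (F g f)` past the last of them.
  rw [← Category.assoc ((F.comp2 (f.1 ≫ g.1) h.1).app W.2), F.comp2_assoc]
  rw [(F.comp2 g.1 h.1).naturality_assoc f.2]
  simp only [Functor.comp_map, Category.assoc]

theorem grId_grComp {X Y : GrObj F} (f : GrHom F X Y) : GrComp F (GrId F X) f = f :=
  GrHom.ext F _ _ (Category.id_comp _) <| by
    simp only [GrComp, GrId, F.comp2_id_left, eqToHom_app, eqToHom_map, eqToHom_trans_assoc]

theorem grComp_grId {X Y : GrObj F} (f : GrHom F X Y) : GrComp F f (GrId F Y) = f := by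
  refine GrHom.ext F _ _ (Category.comp_id _) ?_
  simp only [GrComp, GrId, F.comp2_id_right, eqToHom_app]
  rw [Functor.congr_hom (F.map_id Y.1) f.2]
  simp

/-- the Grothendieck construction `F ⋊ B` of a normal lax functor
`F : B ⇝ Cat` is a category: its composition is associative and unital. -/
theorem grothendieck_is_category {B : Type*} [Category B] (F : NLax B) :
    (∀ (W X Y Z : GrObj F) (f : GrHom F W X) (g : GrHom F X Y) (h : GrHom F Y Z),
      GrComp F (GrComp F f g) h = GrComp F f (GrComp F g h)) ∧
    (∀ (X Y : GrObj F) (f : GrHom F X Y), GrComp F (GrId F X) f = f) ∧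
    (∀ (X Y : GrObj F) (f : GrHom F X Y), GrComp F f (GrId F Y) = f) :=
  ⟨fun _ _ _ _ => grComp_assoc F, fun _ _ => grId_grComp F, fun _ _ => grComp_grId F⟩
end
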